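/- arXiv:1101.3468 — 5 statements merged into one kernel-verified Lean document; each statement's English description precedes it below -/
import Mathlib

section
/- Let H be the hexagonal lattice with minimum distance 2 and D the closed unit disk. If P ⊂ ℝ²/H is a finite set of points such that for every translation t ∈ ℝ² some point of P is not covered by the translated close packing H + t + D, then the translated interstitia I(p) = (ℝ² \ (H + p + D))/H, for p ∈ P, cover the fundamental domain U, and hence |P| ≥ |U| / (2√3 − π) = 2√3/(2√3 − π) > 10, so |P| ≥ 11. -/
noncomputable section

abbrev E2 := EuclideanSpace ℝ (Fin 2)

def pt (x y : ℝ) : E2 := WithLp.toLp 2 ![x, y]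

/-- The hexagonal lattice with minimum distance `d`, generated by `(d,0)` and `(d/2, √3·d/2)`. -/
def hexLattice (d : ℝ) : Set E2 :=
  {p | ∃ m n : ℤ, p = (m : ℝ) • pt d 0 + (n : ℝ) • pt (d / 2) (Real.sqrt 3 * d / 2)}

/-! If every translate of the packing misses a point of `P`, then every `t` lies in the
interstitium of some `p ∈ P`, so the interstitia of the points of `P` cover a fundamental domain
`U` of the lattice. Distinct lattice points are at distance at least `2`, so the unit disks of
`H + p` meet only along circles, which are null; hence each interstitium has area
`|U| - π = 2√3 - π`, and `|P| ≥ 2√3 / (2√3 - π) > 10`. -/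

open MeasureTheory Metric Set Pointwise Submodule Module Real
open scoped Finset

theorem Int.one_le_sq_add_mul_add_sq {m n : ℤ} (h : m ≠ 0 ∨ n ≠ 0) :
    1 ≤ m ^ 2 + m * n + n ^ 2 := by
  have : 0 < m ^ 2 + m * n + n ^ 2 := by
    rcases h with hm | hn
    · nlinarith [sq_nonneg (m + 2 * n), pow_pos (abs_pos.mpr hm) 2, sq_abs m]
    · nlinarith [sq_nonneg (2 * m + n), pow_pos (abs_pos.mpr hn) 2, sq_abs n]
  omega

section HexLattice

variable {d : ℝ}

theorem norm_sq_hex (m n : ℤ) :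
    ‖(m : ℝ) • pt d 0 + (n : ℝ) • pt (d / 2) (√3 * d / 2)‖ ^ 2 =
      d ^ 2 * (m ^ 2 + m * n + n ^ 2) := by
  have h3 : √3 ^ 2 = 3 := Real.sq_sqrt (by norm_num)
  simp only [pt, EuclideanSpace.norm_sq_eq, PiLp.add_apply, PiLp.smul_apply, smul_eq_mul,
    norm_eq_abs, sq_abs, Fin.sum_univ_two, Matrix.cons_val_zero, Matrix.cons_val_one,
    Matrix.cons_val_fin_one, mul_zero, zero_add]
  linear_combination (n * d / 2) ^ 2 * h3

theorem le_norm_of_mem_hexLattice {x : E2} (hx : x ∈ hexLattice d) (hx0 : x ≠ 0) :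
    d ≤ ‖x‖ := by
  obtain ⟨m, n, rfl⟩ := hx
  have hmn : m ≠ 0 ∨ n ≠ 0 := by
    by_contra! h
    simp [h.1, h.2] at hx0
  have hq : (1 : ℝ) ≤ m ^ 2 + m * n + n ^ 2 := by exact_mod_cast Int.one_le_sq_add_mul_add_sq hmn
  have hsq := norm_sq_hex (d := d) m n
  nlinarith [norm_nonneg ((m : ℝ) • pt d 0 + (n : ℝ) • pt (d / 2) (√3 * d / 2))]

theorem linearIndependent_hex (hd : d ≠ 0) :
    LinearIndependent ℝ ![pt d 0, pt (d / 2) (√3 * d / 2)] := by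
  rw [LinearIndependent.pair_iff]
  intro s t h
  have h0 : s * d + t * (d / 2) = 0 := by simpa [pt] using congrArg (· 0) h
  have h1 : t * (√3 * d / 2) = 0 := by simpa [pt] using congrArg (· 1) h
  obtain rfl : t = 0 := by simpa [hd] using h1
  simpa [hd] using h0

def hexBasis (hd : d ≠ 0) : Basis (Fin 2) ℝ E2 :=
  basisOfLinearIndependentOfCardEqFinrank (linearIndependent_hex hd) (by simp)

theorem coe_hexBasis (hd : d ≠ 0) : ⇑(hexBasis hd) = ![pt d 0, pt (d / 2) (√3 * d / 2)] :=
  coe_basisOfLinearIndependentOfCardEqFinrank _ _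

theorem hexLattice_eq_span (hd : d ≠ 0) : hexLattice d = span ℤ (range (hexBasis hd)) := by
  ext x
  simp only [hexLattice, coe_hexBasis, Matrix.range_cons, Matrix.range_empty, union_empty,
    singleton_union, mem_ofPred_eq, SetLike.mem_coe, mem_span_pair, Int.cast_smul_eq_zsmul, eq_comm]

theorem volume_fundamentalDomain_hexBasis (hd : d ≠ 0) :
    volume (ZSpan.fundamentalDomain (hexBasis hd)) = .ofReal (√3 * d ^ 2 / 2) := by
  rw [ZSpan.measure_fundamentalDomain _ _ (EuclideanSpace.basisFun (Fin 2) ℝ).toBasis,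
    measure_congr (ZSpan.fundamentalDomain_ae_parallelepiped _ volume),
    OrthonormalBasis.coe_toBasis, (EuclideanSpace.basisFun (Fin 2) ℝ).volume_parallelepiped,
    mul_one, Basis.det_apply, Matrix.det_fin_two]
  congr 1
  simp only [Basis.toMatrix_apply, coe_hexBasis, pt, Matrix.cons_val_zero, Matrix.cons_val_one,
    Matrix.cons_val_fin_one, OrthonormalBasis.coe_toBasis_repr_apply, EuclideanSpace.basisFun_repr,
    mul_zero, sub_zero]
  rw [show d * (√3 * d / 2) = √3 * d ^ 2 / 2 by ring, abs_of_nonneg (by positivity)]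

end HexLattice

section BallPacking

variable {E : Type*} [NormedAddCommGroup E] {L : AddSubgroup E} {r : ℝ}

def ballPacking (L : AddSubgroup E) (p : E) (r : ℝ) : Set E := ⋃ g : L, g +ᵥ closedBall p r

theorem AddSubgroup.vadd_closedBall (g : L) (p : E) (r : ℝ) :
    g +ᵥ closedBall p r = closedBall ((g : E) + p) r :=
  Metric.vadd_closedBall (g : E) p r

theorem mem_ballPacking_iff {p t : E} :
    t ∈ ballPacking L p r ↔ ∃ g ∈ L, dist t (g + p) ≤ r := by
  simp [ballPacking, AddSubgroup.vadd_closedBall]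

theorem notMem_ballPacking_of_forall_lt_dist {p t : E} (h : ∀ q ∈ L, r < dist p (q + t)) :
    t ∉ ballPacking L p r := fun ht => by
  obtain ⟨g, hg, hgt⟩ := mem_ballPacking_iff.mp ht
  have hdist : dist p (-g + t) = dist t (g + p) := by
    rw [dist_comm t, dist_eq_norm, dist_eq_norm]
    congr 1
    abel
  linarith [h (-g) (neg_mem hg)]

variable [MeasurableSpace E] [BorelSpace E]

theorem measurableSet_vadd_closedBall (g : L) (p : E) : MeasurableSet (g +ᵥ closedBall p r) := by
  rw [AddSubgroup.vadd_closedBall]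
  exact measurableSet_closedBall

theorem measurableSet_ballPacking [Countable L] (p : E) : MeasurableSet (ballPacking L p r) :=
  .iUnion fun g => measurableSet_vadd_closedBall g p

variable [NormedSpace ℝ E] [FiniteDimensional ℝ E] {F : Set E} {μ : Measure E}
  [μ.IsAddHaarMeasure]

theorem pairwise_aedisjoint_vadd_closedBall [Nontrivial E]
    (hL : ∀ g ∈ L, g ≠ 0 → 2 * r ≤ ‖g‖) (p : E) :
    Pairwise fun g g' : L => AEDisjoint μ (g +ᵥ closedBall p r) (g' +ᵥ closedBall p r) := by
  intro g g' hne
  refine measure_mono_null (fun z ⟨hz, hz'⟩ => ?_) (Measure.addHaar_sphere μ ((g : E) + p) r)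
  rw [AddSubgroup.vadd_closedBall, mem_closedBall] at hz hz'
  have hsep : 2 * r ≤ dist ((g : E) + p) (g' + p) := by
    rw [dist_add_right, dist_eq_norm]
    exact hL _ (sub_mem g.2 g'.2) (sub_ne_zero.mpr (Subtype.coe_injective.ne hne))
  have := dist_triangle_left (g + p : E) (g' + p) z
  exact mem_sphere.mpr (by linarith)

theorem MeasureTheory.IsAddFundamentalDomain.measure_ballPacking_inter [Nontrivial E]
    [Countable L]
    (hF : IsAddFundamentalDomain L F μ) (hL : ∀ g ∈ L, g ≠ 0 → 2 * r ≤ ‖g‖) (p : E) :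
    μ (ballPacking L p r ∩ F) = μ (closedBall p r) := by
  -- unfold the ball over the translates of `F`: `μ B = ∑' g, μ (g +ᵥ B ∩ F)`
  rw [hF.measure_eq_tsum (closedBall p r), ballPacking, iUnion_inter]
  refine measure_iUnion₀ (fun g g' hne => ?_) fun g => ?_
  · exact (pairwise_aedisjoint_vadd_closedBall hL p hne).mono inter_subset_left inter_subset_left
  · exact ((measurableSet_vadd_closedBall g p).nullMeasurableSet).inter hF.nullMeasurableSet

theorem MeasureTheory.IsAddFundamentalDomain.measure_diff_ballPacking [Nontrivial E]
    [Countable L]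
    (hF : IsAddFundamentalDomain L F μ) (hL : ∀ g ∈ L, g ≠ 0 → 2 * r ≤ ‖g‖) (p : E) :
    μ (F \ ballPacking L p r) = μ F - μ (closedBall 0 r) := by
  have hpacked := hF.measure_ballPacking_inter hL p
  rw [← sdiff_self_inter, inter_comm, measure_sdiff inter_subset_right
    ((measurableSet_ballPacking p).nullMeasurableSet.inter hF.nullMeasurableSet)
    (hpacked ▸ measure_closedBall_lt_top.ne), hpacked, Measure.addHaar_closedBall_center]

theorem MeasureTheory.IsAddFundamentalDomain.measure_le_card_mul [Nontrivial E] [Countable L]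
    (hF : IsAddFundamentalDomain L F μ) (hL : ∀ g ∈ L, g ≠ 0 → 2 * r ≤ ‖g‖)
    {P : Finset E} (hP : ∀ t, ∃ p ∈ P, t ∉ ballPacking L p r) :
    μ F ≤ #P * (μ F - μ (closedBall 0 r)) := calc
  μ F ≤ μ (⋃ p ∈ P, F \ ballPacking L p r) := measure_mono fun t ht => by
    obtain ⟨p, hp, ht'⟩ := hP t
    exact mem_biUnion hp ⟨ht, ht'⟩
  _ ≤ ∑ p ∈ P, μ (F \ ballPacking L p r) := measure_biUnion_finset_le P _
  _ = #P * (μ F - μ (closedBall 0 r)) := by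
    simp [hF.measure_diff_ballPacking hL]

end BallPacking

theorem eleven_le_of_two_mul_sqrt_three_le {n : ℕ} (h : 2 * √3 ≤ n * (2 * √3 - π)) :
    11 ≤ n := by
  by_contra! hn
  have hn : (n : ℝ) ≤ 10 := by exact_mod_cast Nat.le_of_lt_succ hn
  have h3 : √3 < 1.7320509 := by
    rw [Real.sqrt_lt' (by norm_num)]
    norm_num
  have h3' : 1.7 < √3 := by
    rw [Real.lt_sqrt (by norm_num)]
    norm_num
  nlinarith [pi_gt_d6, pi_lt_d2]

/-- If a finite set of points has the property that every translated hexagonal close packing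
of unit disks misses some point of the set, then the set has at least 11 points. -/
theorem stmt_6 (P : Finset E2)
    (hP : ∀ t : E2, ∃ p ∈ P, ∀ q ∈ hexLattice 2, 1 < dist p (q + t)) :
    11 ≤ P.card := by
  have h2 : (2 : ℝ) ≠ 0 := two_ne_zero
  let H := (span ℤ (range (hexBasis h2))).toAddSubgroup
  have : Countable H := inferInstanceAs (Countable (span ℤ (range (hexBasis h2))))
  have hH : ∀ g ∈ H, g ≠ 0 → 2 * 1 ≤ ‖g‖ := fun g hg hg0 => by
    simpa using le_norm_of_mem_hexLattice (hexLattice_eq_span h2 ▸ hg) hg0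
  have hcover : ∀ t, ∃ p ∈ P, t ∉ ballPacking H p 1 := fun t => by
    obtain ⟨p, hp, hfar⟩ := hP t
    exact ⟨p, hp, notMem_ballPacking_of_forall_lt_dist fun q hq =>
      hfar q (hexLattice_eq_span h2 ▸ hq)⟩
  have hvol := (ZSpan.isAddFundamentalDomain' (hexBasis h2) volume).measure_le_card_mul hH hcover
  rw [volume_fundamentalDomain_hexBasis, EuclideanSpace.volume_closedBall_fin_two,
    ENNReal.ofReal_one, one_pow, one_mul, show √3 * 2 ^ 2 / 2 = 2 * √3 by ring,
    ← ENNReal.ofReal_sub _ pi_nonneg, ← ENNReal.ofReal_natCast,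
    ← ENNReal.ofReal_mul (Nat.cast_nonneg _), ENNReal.ofReal_le_ofReal_iff'] at hvol
  exact eleven_le_of_two_mul_sqrt_three_le
    (hvol.resolve_right (by positivity : 0 < 2 * √3).not_ge)
end
end

section
/- Let D and D' be two non-overlapping unit disks with centers at distance 2 + d apart, where 0 ≤ d < 2r and r = 2/√3 − 1. Then the set of points p on the circle of radius 1 + r concentric with D (positions of hole centers tangent to D) that are at distance less than 1 + r from the center of D' forms an open arc whose central angle is strictly less than or equal to 2π/6, with equality exactly when d = 0. -/
/-!
By the law of cosines, a point `p` at distance `1 + r` from `c` lies within `1 + r` of `c'`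
exactly when `cos ∠ p c c' > |cc'| / (2(1 + r))`, i.e. when `∠ p c c'` is below the arccosine of
that ratio. Since `1 + r = 2/√3`, the ratio equals `√3/2 · (1 + d/2)`, which is `cos (π/6)` at
`d = 0` and grows with `d`, so the half-angle of the arc is at most `π/6`, with equality only
at `d = 0`.
-/

noncomputable section

open Real EuclideanGeometry

theorem Real.lt_arccos_iff_lt_cos {θ t : ℝ} (hθ₀ : 0 ≤ θ) (hθπ : θ ≤ π) (ht : -1 ≤ t) :
    θ < arccos t ↔ t < cos θ := by
  by_cases ht₁ : t ≤ 1
  · conv_rhs => rw [← cos_arccos ht ht₁]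
    exact (strictAntiOn_cos.lt_iff_gt ⟨arccos_nonneg t, arccos_le_pi t⟩ ⟨hθ₀, hθπ⟩).symm
  · rw [arccos_of_one_le (le_of_not_ge ht₁)]
    constructor <;> intro h <;> linarith [cos_le_one θ]

theorem Real.arccos_eq_iff_eq_cos {x y : ℝ} (hy₀ : 0 < y) (hyπ : y < π) :
    arccos x = y ↔ x = cos y := by
  refine ⟨fun h => ?_, arccos_eq_of_eq_cos hy₀.le hyπ.le⟩
  have hx₁ : x < 1 := arccos_pos.1 (h ▸ hy₀)
  have hx₀ : -1 < x := arccos_lt_pi.1 (h ▸ hyπ)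
  rw [← h, cos_arccos hx₀.le hx₁.le]

section

variable {V P : Type*} [NormedAddCommGroup V] [InnerProductSpace ℝ V] [MetricSpace P]
  [NormedAddTorsor V P]

theorem EuclideanGeometry.dist_lt_iff_angle_lt_arccos {p c c' : P} (hp : p ≠ c) (hc : c ≠ c') :
    dist p c' < dist p c ↔ ∠ p c c' < arccos (dist c c' / (2 * dist p c)) := by
  have ha : 0 < dist p c := dist_pos.2 hp
  have hD : 0 < dist c c' := dist_pos.2 hc
  have hcos := law_cos p c c'
  rw [dist_comm c' c] at hcos
  have hratio : 0 < dist c c' / (2 * dist p c) := by positivity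
  rw [lt_arccos_iff_lt_cos (angle_nonneg p c c') (angle_le_pi p c c') (by linarith),
    mul_self_lt_mul_self_iff dist_nonneg ha.le, hcos, div_lt_iff₀ (by positivity)]
  constructor <;> intro h <;> nlinarith

end

theorem stmt_9_general (r d : ℝ) (hr : r = 2 / Real.sqrt 3 - 1)
    (hd0 : 0 ≤ d)
    (c c' : E2) (hcc' : dist c c' = 2 + d) :
    (∀ p : E2, dist p c = 1 + r →
      (dist p c' < 1 + r ↔
        EuclideanGeometry.angle p c c' < Real.arccos ((2 + d) / (2 * (1 + r))))) ∧
    2 * Real.arccos ((2 + d) / (2 * (1 + r))) ≤ 2 * Real.pi / 6 ∧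
    (2 * Real.arccos ((2 + d) / (2 * (1 + r))) = 2 * Real.pi / 6 ↔ d = 0) := by
  have h1r : 1 + r = 2 / √3 := by rw [hr]; ring
  have hratio : (2 + d) / (2 * (1 + r)) = √3 / 2 + √3 / 4 * d := by
    rw [h1r]; field_simp; ring
  have hsqrt3 : 0 < √3 := by positivity
  refine ⟨fun p hp => ?_, ?_, ?_⟩
  · have hpc : p ≠ c := dist_pos.1 (by rw [hp, h1r]; positivity)
    have hcc : c ≠ c' := dist_pos.1 (by rw [hcc']; linarith)
    rw [← hp, ← hcc']
    exact dist_lt_iff_angle_lt_arccos hpc hcc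
  · have hle : arccos ((2 + d) / (2 * (1 + r))) ≤ arccos (cos (π / 6)) := by
      rw [hratio, cos_pi_div_six]
      exact arccos_le_arccos (by nlinarith)
    rw [arccos_cos (by positivity) (by linarith [pi_pos])] at hle
    linarith
  · rw [show 2 * π / 6 = 2 * (π / 6) by ring, mul_right_inj' two_ne_zero,
      arccos_eq_iff_eq_cos (by positivity) (by linarith [pi_pos]), hratio, cos_pi_div_six]
    constructor <;> intro h
    · nlinarith
    · rw [h]; ring

/-- For two non-overlapping unit disks with centers at distance `2 + d`, `0 ≤ d < 2r`,
the positions on the circle of radius `1 + r` around the first center that are within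
distance `1 + r` of the second center form an open arc of central angle
`2·arccos((2+d)/(2(1+r))) ≤ 2π/6`, with equality exactly when `d = 0`. -/
theorem stmt_9 (r d : ℝ) (hr : r = 2 / Real.sqrt 3 - 1)
    (hd0 : 0 ≤ d) (hd2 : d < 2 * r)
    (c c' : E2) (hcc' : dist c c' = 2 + d) :
    (∀ p : E2, dist p c = 1 + r →
      (dist p c' < 1 + r ↔
        EuclideanGeometry.angle p c c' < Real.arccos ((2 + d) / (2 * (1 + r))))) ∧
    2 * Real.arccos ((2 + d) / (2 * (1 + r))) ≤ 2 * Real.pi / 6 ∧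
    (2 * Real.arccos ((2 + d) / (2 * (1 + r))) = 2 * Real.pi / 6 ↔ d = 0) :=
  stmt_9_general r d hr hd0 c c' hcc'
end
end

section
/- A hole cannot be simultaneously tangent to three pairwise non-overlapping unit disks unless the three unit disks are mutually tangent: if a disk of radius r = 2/√3 − 1 is tangent to three unit disks with pairwise disjoint interiors, then the three unit disk centers form an equilateral triangle of side 2. -/
/-
Put `v i = c i - q`. The identity `∑ i, ∑ j, ‖v i - v j‖² = 2n ∑ i, ‖v i‖² - 2‖∑ i, v i‖²`
bounds the sum of squared pairwise distances of `n` points on a sphere of radius `ρ` by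
`2n²ρ²`, which is exactly the value it takes when all `n(n-1)` pairwise distances equal the
edge `d` of a regular simplex inscribed in that sphere. Hence, if no pair is closer than `d`,
every pair is at distance exactly `d`. For three points and `ρ = 1 + r = 2/√3` this edge is `2`.
-/

noncomputable section

open Finset

section

variable {E : Type*} [NormedAddCommGroup E] [InnerProductSpace ℝ E] {ι : Type*} [Fintype ι]

theorem sum_sum_norm_sub_sq (v : ι → E) :
    ∑ i, ∑ j, ‖v i - v j‖ ^ 2 =
      2 * Fintype.card ι * ∑ i, ‖v i‖ ^ 2 - 2 * ‖∑ i, v i‖ ^ 2 := by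
  rw [← real_inner_self_eq_norm_sq, sum_inner]
  simp only [inner_sum, norm_sub_sq_real, sum_add_distrib, sum_sub_distrib, ← mul_sum,
    sum_const, card_univ, nsmul_eq_mul]
  ring

theorem dist_eq_of_mem_sphere_of_le_dist {c : ι → E} {q : E} {ρ d : ℝ} (hd₀ : 0 ≤ d)
    (hd : ((Fintype.card ι : ℝ) - 1) * d ^ 2 = 2 * Fintype.card ι * ρ ^ 2)
    (hc : ∀ i, c i ∈ Metric.sphere q ρ) (hle : Pairwise fun i j => d ≤ dist (c i) (c j)) :
    Pairwise fun i j => dist (c i) (c j) = d := by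
  classical
  set n : ℝ := (Fintype.card ι : ℝ) with hn
  have hsum : ∑ i, ∑ j, dist (c i) (c j) ^ 2 ≤ 2 * n ^ 2 * ρ ^ 2 := by
    have h := sum_sum_norm_sub_sq (fun i => c i - q)
    simp only [sub_sub_sub_cancel_right, ← dist_eq_norm, Metric.mem_sphere.1 (hc _), sum_const,
      card_univ, nsmul_eq_mul] at h
    linarith [sq_nonneg ‖∑ i, (c i - q)‖]
  have hexcess_nonneg : ∀ i, ∀ j ∈ univ.erase i, 0 ≤ dist (c i) (c j) ^ 2 - d ^ 2 :=
    fun i j hj => sub_nonneg.2 (pow_le_pow_left₀ hd₀ (hle (ne_of_mem_erase hj).symm) 2)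
  have hexcess : ∑ i, ∑ j ∈ univ.erase i, (dist (c i) (c j) ^ 2 - d ^ 2) = 0 := by
    refine le_antisymm ?_ (sum_nonneg fun i _ => sum_nonneg (hexcess_nonneg i))
    have hdiag : ∀ i, ∑ j ∈ univ.erase i, dist (c i) (c j) ^ 2 = ∑ j, dist (c i) (c j) ^ 2 :=
      fun i => sum_erase _ (by simp)
    simp only [sum_sub_distrib, hdiag, sum_const, nsmul_eq_mul,
      cast_card_erase_of_mem (mem_univ _), card_univ, ← hn, hd]
    linarith
  intro i j hij
  have hi := (sum_eq_zero_iff_of_nonneg fun i _ => sum_nonneg (hexcess_nonneg i)).1 hexcess i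
    (mem_univ i)
  have hij₀ := (sum_eq_zero_iff_of_nonneg (hexcess_nonneg i)).1 hi j
    (mem_erase.2 ⟨hij.symm, mem_univ j⟩)
  exact (pow_left_inj₀ dist_nonneg hd₀ two_ne_zero).1 (sub_eq_zero.1 hij₀)

end

/-- A hole (disk of radius `r = 2/√3 − 1`) tangent to three pairwise non-overlapping unit
disks forces the three unit disks to be mutually tangent: their centers form an
equilateral triangle of side 2. -/
theorem stmt_10 (c : Fin 3 → E2) (q : E2)
    (hpack : ∀ i j, i ≠ j → 2 ≤ dist (c i) (c j))
    (htan : ∀ i, dist q (c i) = 1 + (2 / Real.sqrt 3 - 1)) :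
    ∀ i j, i ≠ j → dist (c i) (c j) = 2 := by
  have hc : ∀ i, c i ∈ Metric.sphere q (2 / Real.sqrt 3) := fun i => by
    rw [Metric.mem_sphere, dist_comm, htan i]
    ring
  refine dist_eq_of_mem_sphere_of_le_dist zero_le_two ?_ hc hpack
  rw [Fintype.card_fin, div_pow, Real.sq_sqrt zero_le_three]
  norm_num
end
end

section
/- In any packing of unit disks in the plane (disks with pairwise disjoint interiors), for any disk D of the packing and any closed arc A of central angle 2π/6 on the circle of radius 1 + r concentric with D (r = 2/√3 − 1), there exists a point c ∈ A such that the closed disk of radius r centered at c is disjoint from the interiors of all disks of the packing. -/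
/-!
Put `R = 1 + r = 2/√3`. The hole centred at a point `q` of the circle of radius `R` around the
centre `c i₀` of `D` overlaps disk `i` iff `dist (c i) q < R`; call this open set of angles the
arc excluded by `i`. Excluded arcs are pairwise disjoint: three centres at mutual distance `≥ 2`
cannot lie in a closed disk of radius `2/√3` with two of them in its interior, since some two
of them subtend an angle `≤ 2π/3` there. If the arc `[α, α + π/3]` were covered, connectedness
would put it inside a single excluded arc, of disk `i`. Its endpoints are at distance `R`, and
both `c i₀` and `c i` lie within `R` of both endpoints; by Apollonius they are then within `1`
of the midpoint of the chord, so closer than `2` to each other.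
-/

noncomputable section

open Real Set Function

section InnerProduct

variable {V : Type*} [NormedAddCommGroup V] [InnerProductSpace ℝ V] {R : ℝ}

local notation "⟪" x ", " y "⟫" => @inner ℝ _ _ x y

theorem exists_pair_inner_ge_neg_half {u v w : V} (hu : ‖u‖ ≤ 1) (hv : ‖v‖ ≤ 1) (hw : ‖w‖ ≤ 1) :
    -(1 / 2) ≤ ⟪u, v⟫ ∨ -(1 / 2) ≤ ⟪u, w⟫ ∨ -(1 / 2) ≤ ⟪v, w⟫ := by
  by_contra! h
  have hsum : ‖u + v + w‖ ^ 2
      = ‖u‖ ^ 2 + ‖v‖ ^ 2 + ‖w‖ ^ 2 + 2 * (⟪u, v⟫ + ⟪u, w⟫ + ⟪v, w⟫) := by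
    rw [norm_add_sq_real, norm_add_sq_real, inner_add_left]; ring
  nlinarith [sq_nonneg ‖u + v + w‖, norm_nonneg u, norm_nonneg v, norm_nonneg w]

theorem norm_inv_norm_smul_le_one (u : V) : ‖‖u‖⁻¹ • u‖ ≤ 1 := by
  rw [norm_smul, norm_inv, norm_norm]
  exact inv_mul_le_one_of_le₀ le_rfl (norm_nonneg _)

theorem real_inner_eq_norm_mul_norm_mul_inner_normalize (u v : V) :
    ⟪u, v⟫ = ‖u‖ * ‖v‖ * ⟪‖u‖⁻¹ • u, ‖v‖⁻¹ • v⟫ := by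
  rw [real_inner_smul_left, real_inner_smul_right]
  rcases eq_or_ne u 0 with rfl | hu
  · simp
  rcases eq_or_ne v 0 with rfl | hv
  · simp
  have := norm_pos_iff.2 hu
  have := norm_pos_iff.2 hv
  field_simp

/-- Some two of any three vectors make an angle of at most `2π/3`. -/
theorem exists_pair_neg_norm_mul_norm_le_two_inner (u v w : V) :
    -(‖u‖ * ‖v‖) ≤ 2 * ⟪u, v⟫ ∨ -(‖u‖ * ‖w‖) ≤ 2 * ⟪u, w⟫ ∨ -(‖v‖ * ‖w‖) ≤ 2 * ⟪v, w⟫ := by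
  have key (a b : V) (h : -(1 / 2) ≤ ⟪‖a‖⁻¹ • a, ‖b‖⁻¹ • b⟫) : -(‖a‖ * ‖b‖) ≤ 2 * ⟪a, b⟫ := by
    rw [real_inner_eq_norm_mul_norm_mul_inner_normalize a b]
    nlinarith [mul_nonneg (norm_nonneg a) (norm_nonneg b)]
  rcases exists_pair_inner_ge_neg_half (norm_inv_norm_smul_le_one u)
    (norm_inv_norm_smul_le_one v) (norm_inv_norm_smul_le_one w) with h | h | h
  exacts [.inl (key u v h), .inr (.inl (key u w h)), .inr (.inr (key v w h))]

theorem norm_sub_sq_lt_three_mul_sq_of_two_inner_ge {u v : V} (hu : ‖u‖ ≤ R) (hv : ‖v‖ < R)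
    (huv : -(‖u‖ * ‖v‖) ≤ 2 * ⟪u, v⟫) : ‖u - v‖ ^ 2 < 3 * R ^ 2 := by
  rw [norm_sub_sq_real]
  have hR : 0 ≤ R := (norm_nonneg u).trans hu
  nlinarith [mul_le_mul hu hv.le (norm_nonneg v) hR, mul_le_mul hu hu (norm_nonneg u) hR,
    mul_self_lt_mul_self (norm_nonneg v) hv]

theorem dist_lt_two_of_three_mem_ball (hR : 3 * R ^ 2 = 4) {p x y z : V}
    (hx : dist x p ≤ R) (hy : dist y p < R) (hz : dist z p < R) :
    dist x y < 2 ∨ dist x z < 2 ∨ dist y z < 2 := by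
  have key {a b : V} (ha : ‖a - p‖ ≤ R) (hb : ‖b - p‖ < R)
      (hab : -(‖a - p‖ * ‖b - p‖) ≤ 2 * ⟪a - p, b - p⟫) : dist a b < 2 := by
    have h := norm_sub_sq_lt_three_mul_sq_of_two_inner_ge ha hb hab
    rw [sub_sub_sub_cancel_right, ← dist_eq_norm] at h
    nlinarith [dist_nonneg (x := a) (y := b)]
  rw [dist_eq_norm] at hx hy hz
  rcases exists_pair_neg_norm_mul_norm_le_two_inner (x - p) (y - p) (z - p) with h | h | h
  exacts [.inl (key hx hy h), .inr (.inl (key hx hz h)), .inr (.inr (key hy.le hz h))]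

theorem dist_lt_two_of_mem_lens (hR : 3 * R ^ 2 = 4) {q₁ q₂ x y : V} (hq : dist q₁ q₂ = R)
    (hx₁ : dist x q₁ ≤ R) (hx₂ : dist x q₂ ≤ R) (hy₁ : dist y q₁ < R) (hy₂ : dist y q₂ < R) :
    dist x y < 2 := by
  set m := midpoint ℝ q₁ q₂
  have hx := EuclideanGeometry.dist_sq_add_dist_sq_eq_two_mul_dist_midpoint_sq_add_half_dist_sq
    x q₁ q₂
  have hy := EuclideanGeometry.dist_sq_add_dist_sq_eq_two_mul_dist_midpoint_sq_add_half_dist_sq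
    y q₁ q₂
  rw [hq] at hx hy
  have hxm : dist x m ≤ 1 := by
    nlinarith [dist_nonneg (x := x) (y := m), dist_nonneg (x := x) (y := q₁),
      dist_nonneg (x := x) (y := q₂), mul_le_mul hx₁ hx₁ dist_nonneg (dist_nonneg.trans hx₁),
      mul_le_mul hx₂ hx₂ dist_nonneg (dist_nonneg.trans hx₂)]
  have hym : dist y m < 1 := by
    nlinarith [dist_nonneg (x := y) (y := m), dist_nonneg (x := y) (y := q₁),
      dist_nonneg (x := y) (y := q₂)]
  calc dist x y ≤ dist x m + dist y m := dist_triangle_right x y m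
    _ < 2 := by linarith

theorem pairwise_disjoint_setOf_dist_lt {ι X : Type*} (hR : 3 * R ^ 2 = 4) {c : ι → V}
    (hpack : Pairwise fun i j => 2 ≤ dist (c i) (c j)) {i₀ : ι} {f : X → V}
    (hf : ∀ x, dist (c i₀) (f x) = R) :
    Pairwise (Disjoint on fun i => {x | dist (c i) (f x) < R}) := by
  have hne {i : ι} {x : X} (hi : dist (c i) (f x) < R) : i₀ ≠ i := by
    rintro rfl
    exact (hf x).not_lt hi
  refine fun i j hij => disjoint_left.2 fun x hi hj => ?_
  rcases dist_lt_two_of_three_mem_ball hR (hf x).le hi hj with h | h | h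
  exacts [(hpack (hne hi)).not_gt h, (hpack (hne hj)).not_gt h, (hpack hij).not_gt h]

end InnerProduct

theorem IsPreconnected.subset_of_subset_iUnion_of_pairwise_disjoint {α ι : Type*}
    [TopologicalSpace α] {s : Set α} {U : ι → Set α} (hs : IsPreconnected s)
    (hU : ∀ i, IsOpen (U i)) (hdisj : Pairwise (Disjoint on U)) (hsU : s ⊆ ⋃ i, U i)
    {x : α} {i : ι} (hxs : x ∈ s) (hxi : x ∈ U i) : s ⊆ U i := by
  refine hs.subset_left_of_subset_union (hU i) (isOpen_biUnion fun j _ => hU j)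
    (disjoint_iUnion₂_right.2 fun j hj => hdisj (Ne.symm hj)) (fun y hy => ?_) ⟨x, hxs, hxi⟩
  obtain ⟨j, hj⟩ := mem_iUnion.1 (hsU hy)
  rcases eq_or_ne j i with rfl | hji
  · exact .inl hj
  · exact .inr (mem_biUnion (x := j) hji hj)

theorem norm_pt_sq (x y : ℝ) : ‖pt x y‖ ^ 2 = x ^ 2 + y ^ 2 := by
  rw [EuclideanSpace.norm_eq, sq_sqrt (by positivity)]
  simp [pt, Fin.sum_univ_two, sq_abs]

theorem pt_sub_pt (x y x' y' : ℝ) : pt x y - pt x' y' = pt (x - x') (y - y') := by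
  ext i
  fin_cases i <;> simp [pt]

theorem norm_pt_cos_sin (θ : ℝ) : ‖pt (cos θ) (sin θ)‖ = 1 := by
  have h := norm_pt_sq (cos θ) (sin θ)
  rw [cos_sq_add_sin_sq] at h
  nlinarith [norm_nonneg (pt (cos θ) (sin θ))]

theorem dist_pt_cos_sin_sq (a b : ℝ) :
    dist (pt (cos a) (sin a)) (pt (cos b) (sin b)) ^ 2 = 2 - 2 * cos (a - b) := by
  rw [dist_eq_norm, pt_sub_pt, norm_pt_sq, cos_sub]
  nlinarith [sin_sq_add_cos_sq a, sin_sq_add_cos_sq b]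

theorem dist_pt_cos_sin_add_pi_div_three (a : ℝ) :
    dist (pt (cos a) (sin a)) (pt (cos (a + π / 3)) (sin (a + π / 3))) = 1 := by
  have h := dist_pt_cos_sin_sq a (a + π / 3)
  rw [show a - (a + π / 3) = -(π / 3) by ring, cos_neg, cos_pi_div_three] at h
  exact (sq_eq_sq₀ dist_nonneg zero_le_one).1 (by rw [h]; norm_num)

theorem continuous_pt_cos_sin : Continuous fun θ => pt (cos θ) (sin θ) := by
  have h : ∀ θ, pt (cos θ) (sin θ) = cos θ • pt 1 0 + sin θ • pt 0 1 := fun θ => by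
    ext i
    fin_cases i <;> simp [pt]
  simp only [h]
  fun_prop

def circlePt (o : E2) (ρ θ : ℝ) : E2 := o + ρ • pt (cos θ) (sin θ)

theorem dist_circlePt {ρ : ℝ} (hρ : 0 ≤ ρ) (o : E2) (θ : ℝ) : dist o (circlePt o ρ θ) = ρ := by
  simp [circlePt, norm_smul, norm_pt_cos_sin, hρ]

theorem dist_circlePt_add_pi_div_three {ρ : ℝ} (hρ : 0 ≤ ρ) (o : E2) (θ : ℝ) :
    dist (circlePt o ρ θ) (circlePt o ρ (θ + π / 3)) = ρ := by
  simp [circlePt, dist_smul₀, dist_pt_cos_sin_add_pi_div_three, hρ]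

@[fun_prop]
theorem continuous_circlePt (o : E2) (ρ : ℝ) : Continuous (circlePt o ρ) :=
  continuous_const.add (continuous_pt_cos_sin.const_smul ρ)

/-- In any packing of unit disks, along any closed arc of central angle `2π/6` on the circle
of radius `1 + r` around one of the packed disks (`r = 2/√3 − 1`) there is a point `c` such
that the hole (closed disk of radius `r`) centered at `c` is disjoint from the interiors of
all disks of the packing. -/
theorem stmt_12 (r : ℝ) (hr : r = 2 / Real.sqrt 3 - 1)
    (ι : Type) (c : ι → E2)
    (hpack : Pairwise fun i j => 2 ≤ dist (c i) (c j))
    (i₀ : ι) (α : ℝ) :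
    ∃ θ ∈ Set.Icc α (α + 2 * Real.pi / 6),
      ∀ i, 1 + r ≤ dist (c i₀ + (1 + r) • pt (Real.cos θ) (Real.sin θ)) (c i) := by
  rw [show 2 * π / 6 = π / 3 by ring]
  set R := 1 + r
  have hRval : R = 2 / √3 := by simp only [R, hr]; ring
  have hR0 : 0 ≤ R := by rw [hRval]; positivity
  have hR : 3 * R ^ 2 = 4 := by
    rw [hRval, div_pow, sq_sqrt (by norm_num)]; norm_num
  by_contra! hcover
  -- `U i` is the arc of hole centres excluded by the disk `i`.
  set U : ι → Set ℝ := fun i => {θ | dist (c i) (circlePt (c i₀) R θ) < R}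
  have hcoverU : Icc α (α + π / 3) ⊆ ⋃ i, U i := fun θ hθ =>
    mem_iUnion.2 ((hcover θ hθ).imp fun i h => (dist_comm _ _).trans_lt h)
  have hα : α ∈ Icc α (α + π / 3) := left_mem_Icc.2 (by linarith [pi_pos])
  obtain ⟨i, hi⟩ := mem_iUnion.1 (hcoverU hα)
  have harc : Icc α (α + π / 3) ⊆ U i :=
    isPreconnected_Icc.subset_of_subset_iUnion_of_pairwise_disjoint
      (fun j => isOpen_lt (by fun_prop) continuous_const)
      (pairwise_disjoint_setOf_dist_lt hR hpack (dist_circlePt hR0 (c i₀))) hcoverU hα hi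
  have hβ := harc (right_mem_Icc.2 (by linarith [pi_pos]))
  have hi₀ : i₀ ≠ i := by
    rintro rfl
    exact (dist_circlePt hR0 (c i₀) α).not_lt hi
  exact (hpack hi₀).not_gt <| dist_lt_two_of_mem_lens hR
    (dist_circlePt_add_pi_div_three hR0 (c i₀) α) (dist_circlePt hR0 _ _).le
    (dist_circlePt hR0 _ _).le hi hβ
end
end

section
/- The 25 translates of the interstitium by the points of the lattice H/5 cover the fundamental domain: letting H be the hexagonal lattice of minimum distance 2, D the closed unit disk, and I(t) = (ℝ² \ (H + t + D))/H, the sets I(t) for t ranging over a set of coset representatives of (H/5)/H cover ℝ²/H. -/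
/-!
In the coordinates `(u, v)` of the basis `(2, 0)`, `(1, √3)` of `H`, the squared distance from the
origin is `4 (u² + uv + v²)`. The closed triangle `T` with vertices `(2/5, 2/5)`, `(1/5, 2/5)`,
`(2/5, 1/5)` lies in the interstitium: its points have `u + v ≥ 3/5`, which keeps them away from
`0`, and are at coordinate distance `≥ 3/5` from every other lattice point. A fundamental cell of
`H/5` is the union of a translate of `T` and a translate of `-T`, and the interstitium is
symmetric under `x ↦ -x`, so every point has an `H/5`-translate in the interstitium.
-/

noncomputable section

section Coordinates

variable (x y x' y' a : ℝ)

lemma pt_add : pt x y + pt x' y' = pt (x + x') (y + y') := by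
  ext i; fin_cases i <;> simp [pt]

lemma smul_pt : a • pt x y = pt (a * x) (a * y) := by
  ext i; fin_cases i <;> simp [pt]

lemma neg_pt : -pt x y = pt (-x) (-y) := by
  ext i; fin_cases i <;> simp [pt]

lemma dist_pt : dist (pt x y) (pt x' y') = √((x - x') ^ 2 + (y - y') ^ 2) := by
  simp [EuclideanSpace.dist_eq, pt, Real.dist_eq]

lemma pt_surjective (p : E2) : ∃ x y, pt x y = p :=
  ⟨p 0, p 1, by ext i; fin_cases i <;> simp [pt]⟩

end Coordinates

def hexPoint (u v : ℝ) : E2 := pt (2 * u + v) (√3 * v)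

section HexCoordinates

variable (u v u' v' : ℝ)

lemma hexPoint_add : hexPoint u v + hexPoint u' v' = hexPoint (u + u') (v + v') := by
  simp only [hexPoint, pt_add]; ring_nf

lemma neg_hexPoint : -hexPoint u v = hexPoint (-u) (-v) := by
  simp only [hexPoint, neg_pt]; ring_nf

lemma hexPoint_surjective (p : E2) : ∃ u v, hexPoint u v = p := by
  obtain ⟨x, y, rfl⟩ := pt_surjective p
  have h3 : √3 ≠ 0 := by positivity
  exact ⟨(x - y / √3) / 2, y / √3, by simp only [hexPoint]; congr 1 <;> field_simp; ring⟩

lemma dist_hexPoint_sq :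
    dist (hexPoint u v) (hexPoint u' v') ^ 2 =
      4 * ((u - u') ^ 2 + (u - u') * (v - v') + (v - v') ^ 2) := by
  rw [hexPoint, hexPoint, dist_pt, Real.sq_sqrt (by positivity)]
  have h3 : √3 ^ 2 = 3 := Real.sq_sqrt (by norm_num)
  linear_combination (v - v') ^ 2 * h3

end HexCoordinates

lemma smul_add_smul_hexBasis (d u v : ℝ) :
    u • pt d 0 + v • pt (d / 2) (√3 * d / 2) = hexPoint (u * d / 2) (v * d / 2) := by
  simp only [smul_pt, pt_add, hexPoint]; ring_nf

lemma mem_hexLattice_iff {d : ℝ} {q : E2} :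
    q ∈ hexLattice d ↔ ∃ m n : ℤ, q = hexPoint (m * d / 2) (n * d / 2) := by
  simp only [hexLattice, Set.mem_ofPred_eq, smul_add_smul_hexBasis]

lemma hexPoint_div_five_mem (M N : ℤ) : hexPoint (M / 5) (N / 5) ∈ hexLattice (2 / 5) :=
  mem_hexLattice_iff.2 ⟨M, N, by ring_nf⟩

lemma neg_mem_hexLattice {d : ℝ} {q : E2} (hq : q ∈ hexLattice d) : -q ∈ hexLattice d := by
  obtain ⟨m, n, rfl⟩ := hq
  exact ⟨-m, -n, by push_cast; simp only [neg_smul, neg_add]⟩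

def hexTriangle : Set (ℝ × ℝ) := {p | p.1 ≤ 2 / 5 ∧ p.2 ≤ 2 / 5 ∧ 3 / 5 ≤ p.1 + p.2}

section QuadraticForm

variable {a b : ℝ}

lemma quarter_lt_of_le_abs_right (hb : 3 / 5 ≤ |b|) : 1 / 4 < a ^ 2 + a * b + b ^ 2 := by
  have : (3 / 5) ^ 2 ≤ b ^ 2 := by simpa only [sq_abs] using pow_le_pow_left₀ (by norm_num) hb 2
  nlinarith [sq_nonneg (a + b / 2)]

lemma quarter_lt_of_le_abs_left (ha : 3 / 5 ≤ |a|) : 1 / 4 < a ^ 2 + a * b + b ^ 2 := by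
  linarith [quarter_lt_of_le_abs_right (a := b) ha]

lemma quarter_lt_of_le_add (hab : 3 / 5 ≤ a + b) : 1 / 4 < a ^ 2 + a * b + b ^ 2 := by
  nlinarith [sq_nonneg (a - b)]

end QuadraticForm

lemma le_abs_sub_int {u : ℝ} (hu : 1 / 5 ≤ u) (hu' : u ≤ 2 / 5) {m : ℤ} (hm : m ≠ 0) :
    3 / 5 ≤ |u - m| := by
  rcases lt_or_gt_of_ne hm with hm | hm
  · have : (m : ℝ) ≤ -1 := by exact_mod_cast Int.le_sub_one_of_lt hm
    rw [abs_of_pos (by linarith)]; linarith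
  · have : (1 : ℝ) ≤ m := by exact_mod_cast hm
    rw [abs_of_neg (by linarith)]; linarith

lemma one_lt_dist_of_mem_hexTriangle {u v : ℝ} (h : (u, v) ∈ hexTriangle) {q : E2}
    (hq : q ∈ hexLattice 2) : 1 < dist (hexPoint u v) q := by
  obtain ⟨hu, hv, huv⟩ := h
  obtain ⟨m, n, rfl⟩ := mem_hexLattice_iff.1 hq
  rw [mul_div_cancel_right₀ _ two_ne_zero, mul_div_cancel_right₀ _ two_ne_zero,
    ← one_lt_sq_iff₀ dist_nonneg, dist_hexPoint_sq]
  suffices 1 / 4 < (u - m) ^ 2 + (u - m) * (v - n) + (v - n) ^ 2 by linarith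
  by_cases hm : m = 0
  · by_cases hn : n = 0
    · subst hm hn; simpa using quarter_lt_of_le_add huv
    · exact quarter_lt_of_le_abs_right (le_abs_sub_int (by linarith) hv hn)
  · exact quarter_lt_of_le_abs_left (le_abs_sub_int (by linarith) hu hm)

lemma exists_int_div_five_add_mem_hexTriangle (u v : ℝ) : ∃ M N : ℤ,
    (u + M / 5, v + N / 5) ∈ hexTriangle ∨ (-(u + M / 5), -(v + N / 5)) ∈ hexTriangle := by
  have := Int.self_sub_floor (5 * u)
  have := Int.self_sub_floor (5 * v)
  have := Int.fract_nonneg (5 * u)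
  have := Int.fract_nonneg (5 * v)
  have := Int.fract_lt_one (5 * u)
  have := Int.fract_lt_one (5 * v)
  -- The cell `[0, 1/5)²` of `H/5` is cut by its diagonal into a triangle that translates onto
  -- `hexTriangle` and one that translates onto its point reflection.
  rcases lt_or_ge 1 (Int.fract (5 * u) + Int.fract (5 * v)) with hAB | hAB
  · refine ⟨1 - ⌊5 * u⌋, 1 - ⌊5 * v⌋, Or.inl ⟨?_, ?_, ?_⟩⟩ <;> push_cast <;> linarith
  · refine ⟨-2 - ⌊5 * u⌋, -2 - ⌊5 * v⌋, Or.inr ⟨?_, ?_, ?_⟩⟩ <;> push_cast <;> linarith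

/-- The 25 translates of the interstitium by points of `H/5` cover the fundamental domain:
for every `x ∈ ℝ²` there is `t ∈ H/5` (the hexagonal lattice of minimum distance `2/5`)
such that `x + t` is at distance `> 1` from every point of the hexagonal lattice `H` of
minimum distance 2. -/
theorem stmt_18 (x : E2) :
    ∃ t ∈ hexLattice (2 / 5), ∀ q ∈ hexLattice 2, 1 < dist (x + t) q := by
  obtain ⟨u, v, rfl⟩ := hexPoint_surjective x
  obtain ⟨M, N, h | h⟩ := exists_int_div_five_add_mem_hexTriangle u v
  all_goals refine ⟨hexPoint (M / 5) (N / 5), hexPoint_div_five_mem M N, fun q hq => ?_⟩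
  all_goals rw [hexPoint_add]
  · exact one_lt_dist_of_mem_hexTriangle h hq
  · rw [← neg_neg (hexPoint _ _), dist_neg, neg_hexPoint]
    exact one_lt_dist_of_mem_hexTriangle h (neg_mem_hexLattice hq)
end
end
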